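/- arXiv:1911.01561 — 3 statements merged into one kernel-verified Lean document; each statement's English description precedes it below -/
import Mathlib

section
/- Let g : [0,∞) → ℝ be differentiable with g(t) > 0 for all t, and suppose there exist constants c > 0 and γ > 0 such that g'(t) ≤ -c·e^{2γt}·g(t)² for all t ≥ 0. Then for all t ≥ 0, g(t) ≤ (2γ)/(c·(e^{2γt} - 1)). -/
/-!
The substitution `u = 1 / g` linearises the Riccati inequality: `u' = -g' / g² ≥ c e^{2γt}`.
Integrating, `u t ≥ u 0 + c (e^{2γt} - 1) / (2γ) > c (e^{2γt} - 1) / (2γ)`, and the bound on `g`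
follows by inverting, whatever the value of `g 0`.
-/

open Real Set

theorem monotoneOn_inv_sub_of_deriv_le_neg_mul_sq {g f f' : ℝ → ℝ} {D : Set ℝ} (hD : Convex ℝ D)
    (hpos : ∀ t ∈ D, 0 < g t) (hg : ∀ t ∈ D, DifferentiableAt ℝ g t)
    (hf : ∀ t ∈ D, HasDerivAt f (f' t) t) (hineq : ∀ t ∈ D, deriv g t ≤ -f' t * g t ^ 2) :
    MonotoneOn (fun t => (g t)⁻¹ - f t) D := by
  have hderiv : ∀ t ∈ D,
      HasDerivAt (fun t => (g t)⁻¹ - f t) (-deriv g t / g t ^ 2 - f' t) t := fun t ht =>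
    ((hg t ht).hasDerivAt.inv (hpos t ht).ne').sub (hf t ht)
  refine monotoneOn_of_hasDerivWithinAt_nonneg hD
    (fun t ht => (hderiv t ht).continuousAt.continuousWithinAt)
    (fun t ht => (hderiv t (interior_subset ht)).hasDerivWithinAt) fun t ht => ?_
  have ht := interior_subset ht
  rw [sub_nonneg, le_div_iff₀ (pow_pos (hpos t ht) 2)]
  linarith [hineq t ht]

/-- Riccati-type ODE comparison yielding enhanced dissipation:
if `g > 0` is differentiable with `g' ≤ -c e^{2γt} g²`, then
`g t ≤ 2γ / (c (e^{2γt} - 1))`. -/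
theorem stmt0 (g : ℝ → ℝ) (c γ : ℝ) (hc : 0 < c) (hγ : 0 < γ)
    (hpos : ∀ t : ℝ, 0 ≤ t → 0 < g t)
    (hdiff : ∀ t : ℝ, 0 ≤ t → DifferentiableAt ℝ g t)
    (hineq : ∀ t : ℝ, 0 ≤ t → deriv g t ≤ -c * Real.exp (2 * γ * t) * (g t) ^ 2) :
    ∀ t : ℝ, 0 < t → g t ≤ (2 * γ) / (c * (Real.exp (2 * γ * t) - 1)) := by
  intro t ht
  have hexp_deriv : ∀ s ∈ Ici (0 : ℝ),
      HasDerivAt (fun s => c / (2 * γ) * exp (2 * γ * s)) (c * exp (2 * γ * s)) s := by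
    intro s _
    refine ((((hasDerivAt_id' s).const_mul (2 * γ)).exp).const_mul (c / (2 * γ))).congr_deriv ?_
    field_simp
  have hmono := monotoneOn_inv_sub_of_deriv_le_neg_mul_sq (convex_Ici 0) hpos hdiff hexp_deriv
    fun s hs => by simpa only [neg_mul] using hineq s hs
  have key := hmono self_mem_Ici ht.le ht.le
  simp only [mul_zero, exp_zero, mul_one] at key
  have hexp : 1 < exp (2 * γ * t) := one_lt_exp_iff.mpr (by positivity)
  have hlow : c * (exp (2 * γ * t) - 1) / (2 * γ) ≤ (g t)⁻¹ := by
    have hu0 : 0 < (g 0)⁻¹ := inv_pos.mpr (hpos 0 le_rfl)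
    rw [mul_sub, sub_div, mul_one, mul_div_right_comm]
    linarith
  calc g t = ((g t)⁻¹)⁻¹ := (inv_inv _).symm
    _ ≤ (c * (exp (2 * γ * t) - 1) / (2 * γ))⁻¹ :=
      inv_anti₀ (div_pos (mul_pos hc (sub_pos.mpr hexp)) (by positivity)) hlow
    _ = 2 * γ / (c * (exp (2 * γ * t) - 1)) := inv_div _ _
end

section
/- Let Z be a measurable space and P a Markov kernel on Z that factors as P = P_{1/2} ∘ P_{1/2}. Suppose there is a point z* ∈ Z and ε > 0 such that (a) for every bounded measurable φ : Z → ℝ with ‖φ‖_∞ ≤ 1 and all z in the ε-ball around z*, |P_{1/2}φ(z) - P_{1/2}φ(z*)| < 1/2, and (b) there is a set S ⊆ Z and η > 0 with P_{1/2}(z, B_ε(z*)) > η for all z ∈ S. Then for all z₁, z₂ ∈ S, the total variation distance ‖P(z₁,·) - P(z₂,·)‖_{TV} ≤ 1 - η/2. -/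
/-!
Testing the strong Feller bound (a) against `2 · 1_A - 1` shows that `P₂(y, A)` stays within `1/4`
of `c_A := P₂(z*, A)` on the ball `B_ε(z*)`. Since `P(z, A) = ∫ P₂(y, A) P₂(z, dy)` and every
`z ∈ S` puts mass more than `η` on that ball, `P(z, ·)` dominates `m(A) := η (c_A - 1/4)⁺` for all
`z ∈ S`. As `c_{Aᶜ} = 1 - c_A`, we have `m(A) + m(Aᶜ) ≥ η/2`, and two probability measures with a
common minorant of this size are at total variation distance at most `1 - η/2`.
-/

open ProbabilityTheory MeasureTheory

section

variable {X Y Z : Type*} [MeasurableSpace X] [MeasurableSpace Y] [MeasurableSpace Z]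

lemma integral_two_mul_indicator_one_sub_one (μ : Measure Z) [IsProbabilityMeasure μ]
    {A : Set Z} (hA : MeasurableSet A) :
    ∫ x, (2 * A.indicator (1 : Z → ℝ) x - 1) ∂μ = 2 * μ.real A - 1 := by
  have hint : Integrable (A.indicator (1 : Z → ℝ)) μ := (integrable_const 1).indicator hA
  rw [integral_sub (hint.const_mul 2) (integrable_const 1), integral_const_mul,
    integral_indicator_one hA]
  simp

lemma abs_measureReal_sub_lt_of_abs_integral_sub_lt (μ ν : Measure Z)
    [IsProbabilityMeasure μ] [IsProbabilityMeasure ν] {δ : ℝ}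
    (h : ∀ φ : Z → ℝ, Measurable φ → (∀ z, |φ z| ≤ 1) → |∫ y, φ y ∂μ - ∫ y, φ y ∂ν| < δ)
    {A : Set Z} (hA : MeasurableSet A) :
    |μ.real A - ν.real A| < δ / 2 := by
  have hφ : Measurable fun x => 2 * A.indicator (1 : Z → ℝ) x - 1 :=
    ((measurable_const.indicator hA).const_mul 2).sub measurable_const
  have hφ_le : ∀ x, |2 * A.indicator (1 : Z → ℝ) x - 1| ≤ 1 := by
    intro x
    by_cases hx : x ∈ A <;> norm_num [hx]
  have := h _ hφ hφ_le
  rw [integral_two_mul_indicator_one_sub_one μ hA, integral_two_mul_indicator_one_sub_one ν hA,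
    show 2 * μ.real A - 1 - (2 * ν.real A - 1) = 2 * (μ.real A - ν.real A) by ring, abs_mul,
    abs_two] at this
  linarith

lemma ProbabilityTheory.Kernel.mul_measureReal_le_comp_apply (κ : Kernel Y Z) (η : Kernel X Y)
    [IsFiniteKernel κ] [IsFiniteKernel η] {A : Set Z} (hA : MeasurableSet A) {B : Set Y}
    {c : ℝ} (hc₀ : 0 ≤ c) (hc : ∀ y ∈ B, c ≤ (κ y).real A) (x : X) :
    c * (η x).real B ≤ ((κ ∘ₖ η) x).real A := by
  have hB : B ⊆ {y | ENNReal.ofReal c ≤ κ y A} := fun y hy =>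
    ENNReal.ofReal_le_of_le_toReal (hc y hy)
  have hle : ENNReal.ofReal c * η x B ≤ (κ ∘ₖ η) x A :=
    calc ENNReal.ofReal c * η x B
        ≤ ENNReal.ofReal c * η x {y | ENNReal.ofReal c ≤ κ y A} := by gcongr
      _ ≤ ∫⁻ y, κ y A ∂(η x) :=
          mul_meas_ge_le_lintegral₀ (κ.measurable_coe hA).aemeasurable _
      _ = (κ ∘ₖ η) x A := (Kernel.comp_apply' _ _ _ hA).symm
  have := ENNReal.toReal_mono (measure_ne_top _ _) hle
  rwa [ENNReal.toReal_mul, ENNReal.toReal_ofReal hc₀] at this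

lemma abs_measureReal_sub_le_of_forall_le (μ₁ μ₂ : Measure Z)
    [IsProbabilityMeasure μ₁] [IsProbabilityMeasure μ₂] (m : Set Z → ℝ) {δ : ℝ}
    (h₁ : ∀ A, MeasurableSet A → m A ≤ μ₁.real A) (h₂ : ∀ A, MeasurableSet A → m A ≤ μ₂.real A)
    (hm : ∀ A, MeasurableSet A → δ ≤ m A + m Aᶜ) {A : Set Z} (hA : MeasurableSet A) :
    |μ₁.real A - μ₂.real A| ≤ 1 - δ := by
  have := hm A hA
  have h₁c := h₁ Aᶜ hA.compl
  have h₂c := h₂ Aᶜ hA.compl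
  rw [probReal_compl_eq_one_sub hA] at h₁c h₂c
  rw [abs_sub_le_iff]
  constructor <;> linarith [h₁ A hA, h₂ A hA]

end

theorem stmt3_general {Z : Type*} [MeasurableSpace Z] [MetricSpace Z]
    (P P2 : Kernel Z Z) [IsMarkovKernel P2]
    (hfac : P = P2.comp P2)
    (zstar : Z) (ε : ℝ)
    (ha : ∀ φ : Z → ℝ, Measurable φ → (∀ z, |φ z| ≤ 1) →
      ∀ z ∈ Metric.ball zstar ε,
        |(∫ y, φ y ∂(P2 z)) - ∫ y, φ y ∂(P2 zstar)| < 1 / 2)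
    (S : Set Z) (η : ℝ) (hη : 0 < η)
    (hb : ∀ z ∈ S, η < (P2 z (Metric.ball zstar ε)).toReal) :
    ∀ z₁ ∈ S, ∀ z₂ ∈ S, ∀ A : Set Z, MeasurableSet A →
      |(P z₁ A).toReal - (P z₂ A).toReal| ≤ 1 - η / 2 := by
  subst hfac
  intro z₁ hz₁ z₂ hz₂ A hA
  let m : Set Z → ℝ := fun A => η * max 0 ((P2 zstar).real A - 1 / 4)
  have hm_le : ∀ z ∈ S, ∀ A, MeasurableSet A → m A ≤ ((P2 ∘ₖ P2) z).real A := by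
    intro z hz A hA
    have hball : ∀ y ∈ Metric.ball zstar ε, max 0 ((P2 zstar).real A - 1 / 4) ≤ (P2 y).real A :=
      fun y hy => max_le measureReal_nonneg <| by
        linarith [(abs_lt.mp (abs_measureReal_sub_lt_of_abs_integral_sub_lt _ _
          (fun φ hφ hφ_le => ha φ hφ hφ_le y hy) hA)).1]
    calc m A = max 0 ((P2 zstar).real A - 1 / 4) * η := mul_comm _ _
      _ ≤ max 0 ((P2 zstar).real A - 1 / 4) * (P2 z).real (Metric.ball zstar ε) :=
          mul_le_mul_of_nonneg_left (hb z hz).le (le_max_left _ _)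
      _ ≤ ((P2 ∘ₖ P2) z).real A :=
          Kernel.mul_measureReal_le_comp_apply _ _ hA (le_max_left _ _) hball z
  have hm_add : ∀ A, MeasurableSet A → η / 2 ≤ m A + m Aᶜ := by
    intro A hA
    simp only [m, probReal_compl_eq_one_sub hA]
    nlinarith [le_max_right 0 ((P2 zstar).real A - 1 / 4),
      le_max_right 0 (1 - (P2 zstar).real A - 1 / 4)]
  exact abs_measureReal_sub_le_of_forall_le _ _ m (hm_le z₁ hz₁) (hm_le z₂ hz₂) hm_add hA

/-- Quantitative minorization: if `P = P₂ ∘ P₂` with `P₂` locally strong Feller at a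
reference point `z*` (condition (a)) and `P₂(z, B_ε(z*)) > η` for all `z ∈ S`
(condition (b)), then transition kernels from points of `S` are at total variation
distance at most `1 - η/2`. -/
theorem stmt3 {Z : Type*} [MeasurableSpace Z] [MetricSpace Z]
    (P P2 : Kernel Z Z) [IsMarkovKernel P] [IsMarkovKernel P2]
    (hfac : P = P2.comp P2)
    (zstar : Z) (ε : ℝ) (hε : 0 < ε)
    (ha : ∀ φ : Z → ℝ, Measurable φ → (∀ z, |φ z| ≤ 1) →
      ∀ z ∈ Metric.ball zstar ε,
        |(∫ y, φ y ∂(P2 z)) - ∫ y, φ y ∂(P2 zstar)| < 1 / 2)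
    (S : Set Z) (η : ℝ) (hη : 0 < η)
    (hb : ∀ z ∈ S, η < (P2 z (Metric.ball zstar ε)).toReal) :
    ∀ z₁ ∈ S, ∀ z₂ ∈ S, ∀ A : Set Z, MeasurableSet A →
      |(P z₁ A).toReal - (P z₂ A).toReal| ≤ 1 - η / 2 :=
  stmt3_general P P2 hfac zstar ε ha S η hη hb
end

section
/- Let h : [0,∞) → ℝ≥0 and V : [0,∞) → ℝ≥0 be continuous, Λ > 0, C' > 0, and suppose for all t ≥ 0: e^{Λt}h(t) - h(0) ≤ C'·∫₀ᵗ e^{Λs}V(s) ds, and for some ζ > Λ and C_ζ > 0: e^{Λt}V(t) - V(0) ≤ ∫₀ᵗ e^{Λs}((Λ - ζ)V(s) + C_ζ) ds. If additionally ζ - Λ ≥ C', then the sum W(t) = h(t) + V(t) satisfies W(t) ≤ e^{-Λt}W(0) + C_ζ/Λ for all t ≥ 0. -/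
/-!
Adding the two integrated inequalities gives
`e^{Λt} W(t) - W(0) ≤ ∫₀ᵗ e^{Λs} ((C' + Λ - ζ) V(s) + C_ζ) ds`, and since `C' + Λ - ζ ≤ 0` and
`V ≥ 0` the `V`-term can be dropped. What is left is `C_ζ ∫₀ᵗ e^{Λs} ds = C_ζ (e^{Λt} - 1) / Λ`,
and dividing by `e^{Λt}` gives the drift bound.
-/

open Real Set intervalIntegral

theorem integral_exp_mul_left {c : ℝ} (hc : c ≠ 0) (a b : ℝ) :
    ∫ s in a..b, exp (c * s) = (exp (c * b) - exp (c * a)) / c := by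
  rw [integral_comp_mul_left (fun x => exp x) hc, integral_exp, smul_eq_mul, inv_mul_eq_div]

theorem integral_mul_add_le_of_add_nonpos {a b c d C : ℝ} {w V : ℝ → ℝ} (hab : a ≤ b)
    (hw : ContinuousOn w (Icc a b)) (hV : ContinuousOn V (Icc a b))
    (hw_nonneg : ∀ s ∈ Icc a b, 0 ≤ w s) (hV_nonneg : ∀ s ∈ Icc a b, 0 ≤ V s)
    (hcd : c + d ≤ 0) :
    c * (∫ s in a..b, w s * V s) + ∫ s in a..b, w s * (d * V s + C) ≤
      ∫ s in a..b, w s * C := by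
  rw [← uIcc_of_le hab] at hw hV
  have hwV : IntervalIntegrable (fun s => w s * V s) MeasureTheory.volume a b :=
    (hw.mul hV).intervalIntegrable
  have hwdV : IntervalIntegrable (fun s => w s * (d * V s + C)) MeasureTheory.volume a b :=
    (hw.mul ((continuousOn_const.mul hV).add continuousOn_const)).intervalIntegrable
  have hwC : IntervalIntegrable (fun s => w s * C) MeasureTheory.volume a b :=
    (hw.mul continuousOn_const).intervalIntegrable
  rw [← integral_const_mul, ← integral_add (hwV.const_mul c) hwdV]
  refine integral_mono_on hab ((hwV.const_mul c).add hwdV) hwC fun s hs => ?_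
  have hdrop : w s * ((c + d) * V s) ≤ 0 :=
    mul_nonpos_of_nonneg_of_nonpos (hw_nonneg s hs)
      (mul_nonpos_of_nonpos_of_nonneg hcd (hV_nonneg s hs))
  linarith [show c * (w s * V s) + w s * (d * V s + C) = w s * C + w s * ((c + d) * V s) by ring]

theorem le_exp_neg_mul_add_div_of_exp_mul_sub_le {Λ C t w w₀ : ℝ} (hΛ : 0 < Λ) (hC : 0 ≤ C)
    (hw : exp (Λ * t) * w - w₀ ≤ C * ((exp (Λ * t) - 1) / Λ)) :
    w ≤ exp (-Λ * t) * w₀ + C / Λ := by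
  have hE := exp_pos (Λ * t)
  rw [neg_mul, exp_neg, inv_mul_eq_div, div_add_div _ _ hE.ne' hΛ.ne', le_div_iff₀ (by positivity)]
  rw [mul_div_assoc', le_div_iff₀ hΛ] at hw
  linarith

theorem stmt16_general (h V : ℝ → ℝ) (Λ C' ζ Cζ : ℝ)
    (hV : ContinuousOn V (Set.Ici (0:ℝ)))
    (hVnn : ∀ t : ℝ, 0 ≤ t → 0 ≤ V t)
    (hΛ : 0 < Λ) (hCζ : 0 < Cζ)
    (h1 : ∀ t : ℝ, 0 ≤ t →
      Real.exp (Λ * t) * h t - h 0 ≤ C' * ∫ s in (0:ℝ)..t, Real.exp (Λ * s) * V s)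
    (h2 : ∀ t : ℝ, 0 ≤ t →
      Real.exp (Λ * t) * V t - V 0 ≤
        ∫ s in (0:ℝ)..t, Real.exp (Λ * s) * ((Λ - ζ) * V s + Cζ))
    (habs : C' ≤ ζ - Λ) :
    ∀ t : ℝ, 0 ≤ t → h t + V t ≤ Real.exp (-Λ * t) * (h 0 + V 0) + Cζ / Λ := by
  intro t ht
  have habsorb := integral_mul_add_le_of_add_nonpos (C := Cζ) (w := fun s => exp (Λ * s)) ht
    (by fun_prop) (hV.mono Icc_subset_Ici_self)
    (fun s _ => (exp_pos (Λ * s)).le) (fun s hs => hVnn s hs.1) (by linarith : C' + (Λ - ζ) ≤ 0)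
  rw [integral_mul_const, integral_exp_mul_left hΛ.ne', mul_zero, exp_zero] at habsorb
  refine le_exp_neg_mul_add_div_of_exp_mul_sub_le hΛ hCζ.le ?_
  linarith [h1 t ht, h2 t ht]

/-- Combining an approximate-eigenfunction inequality for `h` with an integrated
super-Lyapunov inequality for `V`: if `ζ - Λ ≥ C'`, then `W = h + V` satisfies the
drift bound `W(t) ≤ e^{-Λt} W(0) + C_ζ/Λ`. -/
theorem stmt16 (h V : ℝ → ℝ) (Λ C' ζ Cζ : ℝ)
    (hh : ContinuousOn h (Set.Ici (0:ℝ))) (hV : ContinuousOn V (Set.Ici (0:ℝ)))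
    (hhnn : ∀ t : ℝ, 0 ≤ t → 0 ≤ h t) (hVnn : ∀ t : ℝ, 0 ≤ t → 0 ≤ V t)
    (hΛ : 0 < Λ) (hC' : 0 < C') (hCζ : 0 < Cζ) (hζ : Λ < ζ)
    (h1 : ∀ t : ℝ, 0 ≤ t →
      Real.exp (Λ * t) * h t - h 0 ≤ C' * ∫ s in (0:ℝ)..t, Real.exp (Λ * s) * V s)
    (h2 : ∀ t : ℝ, 0 ≤ t →
      Real.exp (Λ * t) * V t - V 0 ≤
        ∫ s in (0:ℝ)..t, Real.exp (Λ * s) * ((Λ - ζ) * V s + Cζ))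
    (habs : C' ≤ ζ - Λ) :
    ∀ t : ℝ, 0 ≤ t → h t + V t ≤ Real.exp (-Λ * t) * (h 0 + V 0) + Cζ / Λ :=
  stmt16_general h V Λ C' ζ Cζ hV hVnn hΛ hCζ h1 h2 habs
end
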